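/- Define, for each vertex v, the sets P_0(v) = {v} and, for 1 ≤ i ≤ k, P_i(v) = P_{i−1}(v) ∪ ⋃_{(u,v) ∈ E_i} P_{i−1}(u). If for some step t ≤ k one has |P_t(v)| = |V| for every vertex v, then for every pair of distinct vertices u, v there is a strict journey from u to v using only time indices ≤ t; in particular, the evolving graph is temporally connected for strict journeys and the algorithm may terminate early returning the complete graph. -/

import Mathlib

/-!
An evolving graph on a finite vertex set `V` is given by edge sets
`E i ⊆ V × V` for time steps `i ∈ {1, ..., k}`.  A strict journey from `u`
to `v` using only time indices `≤ t` is a directed walk with at least one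
edge, whose edges carry strictly increasing time indices in `{1, ..., t}`.
We encode a walk with `p + 1 ≥ 1` edges by its vertex sequence
`w : Fin (p + 2) → V`.
-/

variable {V : Type*}

/-- There is a strict journey from `u` to `v` using only time indices `≤ i`. -/
def StrictJourneyLE (E : ℕ → Finset (V × V)) (i : ℕ) (u v : V) : Prop :=
  ∃ (p : ℕ) (w : Fin (p + 2) → V) (t : Fin (p + 1) → ℕ),
    StrictMono t ∧ (∀ j, 1 ≤ t j ∧ t j ≤ i) ∧
    w 0 = u ∧ w (Fin.last (p + 1)) = v ∧
    ∀ j : Fin (p + 1), (w j.castSucc, w j.succ) ∈ E (t j)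

/-- The predecessor sets of the algorithm: `P 0 v = {v}` and
`P (i+1) v = P i v ∪ ⋃_{(u,v) ∈ E (i+1)} P i u`. -/
def P [DecidableEq V] (E : ℕ → Finset (V × V)) : ℕ → V → Finset V
  | 0, v => {v}
  | i + 1, v =>
      P E i v ∪ ((E (i + 1)).filter (fun e => e.2 = v)).biUnion (fun e => P E i e.1)

/-!
A vertex `u` enters `P (i+1) v` either from `P i v` or through an edge `(x, v) ∈ E (i+1)` with
`u ∈ P i x`; appending that edge at time `i + 1` to a journey from `u` to `x` within time `i`
keeps the times strictly increasing. So by induction every `u ∈ P i v` other than `v` reaches `v`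
within time `i`, and `|P t v| = |V|` means `P t v` is all of `V`.
-/

namespace StrictJourneyLE

variable {E : ℕ → Finset (V × V)} {i j : ℕ} {u x v : V}

lemma mono (hij : i ≤ j) (h : StrictJourneyLE E i u v) : StrictJourneyLE E j u v :=
  let ⟨p, w, t, hmono, hbd, hw⟩ := h
  ⟨p, w, t, hmono, fun l => ⟨(hbd l).1, (hbd l).2.trans hij⟩, hw⟩

lemma of_mem (hj : 1 ≤ j) (he : (u, v) ∈ E j) : StrictJourneyLE E j u v :=
  ⟨0, ![u, v], fun _ => j, Subsingleton.strictMono (α := Fin 1) _, fun _ => ⟨hj, le_rfl⟩,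
    rfl, rfl, fun l => by simpa [Fin.fin_one_eq_zero l] using he⟩

lemma snoc (h : StrictJourneyLE E i u x) (hij : i < j) (he : (x, v) ∈ E j) :
    StrictJourneyLE E j u v := by
  obtain ⟨p, w, t, hmono, hbd, hu, hx, hedge⟩ := h
  refine ⟨p + 1, Fin.snoc w v, Fin.snoc t j, ?_, ?_, ?_, Fin.snoc_last _ _, ?_⟩
  · refine Fin.strictMono_iff_lt_succ.2 (Fin.lastCases ?_ fun l => ?_)
    · rw [Fin.succ_last, Fin.snoc_last, Fin.snoc_castSucc]
      exact (hbd _).2.trans_lt hij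
    · rw [Fin.succ_castSucc, Fin.snoc_castSucc, Fin.snoc_castSucc]
      exact hmono Fin.castSucc_lt_succ
  · refine Fin.lastCases ?_ fun l => ?_
    · rw [Fin.snoc_last]
      exact ⟨(hbd 0).1.trans ((hbd 0).2.trans hij.le), le_rfl⟩
    · rw [Fin.snoc_castSucc]
      exact ⟨(hbd l).1, (hbd l).2.trans hij.le⟩
  · rwa [← Fin.castSucc_zero, Fin.snoc_castSucc]
  · refine Fin.lastCases ?_ fun l => ?_
    · rwa [Fin.succ_last, Fin.snoc_last, Fin.snoc_castSucc, Fin.snoc_last, hx]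
    · rw [Fin.succ_castSucc, Fin.snoc_castSucc, Fin.snoc_castSucc, Fin.snoc_castSucc]
      exact hedge l

end StrictJourneyLE

lemma eq_or_strictJourneyLE_of_mem_P [DecidableEq V] {E : ℕ → Finset (V × V)} {i : ℕ}
    {u v : V} (hu : u ∈ P E i v) : u = v ∨ StrictJourneyLE E i u v := by
  induction i generalizing v with
  | zero => exact .inl (Finset.mem_singleton.1 hu)
  | succ i ih =>
    simp only [P, Finset.mem_union, Finset.mem_biUnion, Finset.mem_filter] at hu
    rcases hu with hu | ⟨⟨x, _⟩, ⟨he, rfl⟩, hu⟩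
    · exact (ih hu).imp_right (StrictJourneyLE.mono i.le_succ)
    · rcases ih hu with rfl | h
      · exact .inr (.of_mem i.succ_pos he)
      · exact .inr (h.snoc i.lt_succ_self he)

theorem early_termination [Fintype V] [DecidableEq V]
    (k : ℕ) (E : ℕ → Finset (V × V)) (t : ℕ) (htk : t ≤ k)
    (hfull : ∀ v : V, (P E t v).card = Fintype.card V) :
    (∀ u v : V, u ≠ v → StrictJourneyLE E t u v) ∧
    (∀ u v : V, u ≠ v → StrictJourneyLE E k u v) := by
  have journey : ∀ u v : V, u ≠ v → StrictJourneyLE E t u v := fun u v huv =>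
    have hu : u ∈ P E t v := Finset.eq_univ_of_card _ (hfull v) ▸ Finset.mem_univ u
    (eq_or_strictJourneyLE_of_mem_P hu).resolve_left huv
  exact ⟨journey, fun u v huv => (journey u v huv).mono htk⟩
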